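/- arXiv:2309.11650 — 2 statements merged into one kernel-verified Lean document; each statement's English description precedes it below -/
import Mathlib

section
/- Let G* be a finite planar directed multigraph, embedded in the plane, with every vertex of in-degree exactly 3, containing no loops and no multi-edges inside a given non-self-intersecting boundary cycle B with n ≥ 3 vertices. Let m be the number of edges directed from the interior of B into B (other than edges of B). If every bounded face of the subgraph G*_i enclosed by B has at least k ≥ 3 edges, then 2(k-3)(v_i - n) + (k-2)m + k - n ≤ 0; in particular 0 ≤ m ≤ n - 3. -/
open Finset

/-- Setup as in the previous statement: `G*_i` is the subgraph of a
planar directed multigraph enclosed by a non-self-intersecting boundary cycle `B` with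
`n ≥ 3` vertices and cycle edges `C`; interior vertices have in-degree 3; `m` is the
number of edges into `B` other than the cycle edges.  Assume `G*_i` has no loops and no
multi-edges, let `fI` be the number of its bounded faces, with Euler's formula
`fI = e_i - v_i + 1`, and suppose every bounded face has at least `k ≥ 3` edges, so that
`k·fI ≤ 2 e_i - n`.  Then `2(k-3)(v_i - n) + (k-2)m + k - n ≤ 0`; in particular
`0 ≤ m ≤ n - 3`. -/
theorem cycle_interior_bound {V E : Type*} [Fintype V] [Fintype E]
    [DecidableEq V] [DecidableEq E]
    (head tail : E → V) (B : Finset V) (C : Finset E) (fI k : ℕ)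
    (hn : 3 ≤ B.card) (hk : 3 ≤ k)
    (hCcard : C.card = B.card)
    (hCends : ∀ e ∈ C, head e ∈ B ∧ tail e ∈ B)
    (hCbij : Set.BijOn head ↑C ↑B)
    (hindeg : ∀ v : V, v ∉ B → (univ.filter fun e => head e = v).card = 3)
    (hnoloop : ∀ e : E, head e ≠ tail e)
    (hnomulti : ∀ e e' : E, s(head e, tail e) = s(head e', tail e') → e = e')
    (heuler : (fI : ℤ) = (Fintype.card E : ℤ) - (Fintype.card V : ℤ) + 1)
    (hface : (k : ℤ) * (fI : ℤ) ≤ 2 * (Fintype.card E : ℤ) - (B.card : ℤ)) :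
    2 * ((k : ℤ) - 3) * ((Fintype.card V : ℤ) - (B.card : ℤ)) +
        ((k : ℤ) - 2) * ((univ.filter fun e => e ∉ C ∧ head e ∈ B).card : ℤ) +
        (k : ℤ) - (B.card : ℤ) ≤ 0 ∧
      (0 : ℤ) ≤ ((univ.filter fun e => e ∉ C ∧ head e ∈ B).card : ℤ) ∧
      ((univ.filter fun e => e ∉ C ∧ head e ∈ B).card : ℤ) ≤ (B.card : ℤ) - 3 := by
  classical
  set n := B.card with hn'
  set m := (univ.filter fun e => e ∉ C ∧ head e ∈ B).card with hm'
  -- count edges with head in B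
  have hinB : (univ.filter fun e => head e ∈ B).card = n + m := by
    have hsplit := Finset.card_filter_add_card_filter_not
      (s := univ.filter fun e => head e ∈ B) (p := fun e => e ∈ C)
    have h1 : ((univ.filter fun e => head e ∈ B).filter fun e => e ∈ C) = C := by
      ext e
      simp only [Finset.mem_filter, Finset.mem_univ, true_and]
      exact ⟨fun h => h.2, fun h => ⟨(hCends e h).1, h⟩⟩
    have h2 : ((univ.filter fun e => head e ∈ B).filter fun e => ¬ e ∈ C)
        = univ.filter fun e => e ∉ C ∧ head e ∈ B := by
      ext e; simp only [Finset.mem_filter, Finset.mem_univ, true_and]; tauto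
    rw [h1, h2] at hsplit
    omega
  -- count edges with head not in B
  have houtB : (univ.filter fun e => head e ∉ B).card = 3 * (Fintype.card V - n) := by
    have hfib : (univ.filter fun e => head e ∉ B).card
        = ∑ v ∈ Bᶜ, ((univ.filter fun e => head e ∉ B).filter
            fun e => head e = v).card := by
      apply Finset.card_eq_sum_card_fiberwise
      intro e he
      simpa using he
    have hfib2 : ∀ v ∈ Bᶜ, ((univ.filter fun e => head e ∉ B).filter
        fun e => head e = v).card = 3 := by
      intro v hv
      rw [Finset.mem_compl] at hv
      have : ((univ.filter fun e => head e ∉ B).filter fun e => head e = v)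
          = univ.filter fun e => head e = v := by
        ext e
        simp only [Finset.mem_filter, Finset.mem_univ, true_and]
        constructor
        · exact fun h => h.2
        · intro h; exact ⟨h ▸ hv, h⟩
      rw [this]; exact hindeg v hv
    rw [hfib, Finset.sum_congr rfl hfib2, Finset.sum_const, smul_eq_mul,
      Finset.card_compl]
    ring
  have htot := Finset.card_filter_add_card_filter_not
    (s := (univ : Finset E)) (p := fun e => head e ∈ B)
  have hvn : n ≤ Fintype.card V := Finset.card_le_univ B
  have hE : (Fintype.card E : ℤ)
      = 3 * ((Fintype.card V : ℤ) - n) + n + m := by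
    rw [hinB, houtB] at htot
    rw [Finset.card_univ] at htot
    zify [hvn] at htot
    linarith
  have key : 2 * ((k : ℤ) - 3) * ((Fintype.card V : ℤ) - n) + ((k : ℤ) - 2) * m
      + (k : ℤ) - n = (k : ℤ) * fI - (2 * (Fintype.card E : ℤ) - n) := by
    rw [heuler, hE]; ring
  have hG : 2 * ((k : ℤ) - 3) * ((Fintype.card V : ℤ) - n) + ((k : ℤ) - 2) * m
      + (k : ℤ) - n ≤ 0 := by rw [key]; linarith
  refine ⟨hG, Int.ofNat_nonneg m, ?_⟩
  have hk' : (3 : ℤ) ≤ k := by exact_mod_cast hk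
  have hvn' : (n : ℤ) ≤ Fintype.card V := by exact_mod_cast hvn
  have hm0 : (0 : ℤ) ≤ m := Int.ofNat_nonneg m
  nlinarith [mul_nonneg (by linarith : (0:ℤ) ≤ (k:ℤ) - 3)
      (by linarith : (0:ℤ) ≤ (Fintype.card V : ℤ) - n),
    mul_nonneg (by linarith : (0:ℤ) ≤ (k:ℤ) - 3) hm0]
end

section
/- Let G be a finite planar graph (with a fixed planar embedding) with bounded face set ℱ and edge set E, and suppose every nonempty subset S of ℱ satisfies e_S > 3 f_S (i.e., G has no contractible subset of faces), where f_S = |S| and e_S is the number of edges lying on faces of S. Then there exists a function φ: ℱ → (unordered triples of edges of E) such that for each face F all three edges of φ(F) lie on the boundary of F, and φ(F) ∩ φ(F') = ∅ for distinct faces F, F' (an edge-injective function). -/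
open Finset

/-- Let `G` be a finite planar graph with bounded face set `ℱ` and
edge set `E`, where `bdry f` is the set of edges on the boundary of the face `f`.
Suppose `G` has no contractible subset of faces, i.e. every nonempty subset `S` of faces
satisfies `e_S > 3 f_S` (with `f_S = |S|` and `e_S` the number of edges lying on faces
of `S`).  Then there exists an edge-injective function: a map `φ` assigning to each face
a set of three of its boundary edges, with the sets pairwise disjoint. -/
theorem exists_edge_injective_function {F E : Type*} [Fintype F] [Fintype E]
    [DecidableEq F] [DecidableEq E]
    (bdry : F → Finset E)
    (h : ∀ S : Finset F, S.Nonempty → 3 * S.card < (S.biUnion bdry).card) :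
    ∃ φ : F → Finset E,
      (∀ f, (φ f).card = 3 ∧ φ f ⊆ bdry f) ∧
      ∀ f g, f ≠ g → Disjoint (φ f) (φ g) := by
  -- Apply Hall's theorem to the type `F × Fin 3`.
  set t : F × Fin 3 → Finset E := fun p => bdry p.1 with ht
  have hall : ∀ s : Finset (F × Fin 3), s.card ≤ (s.biUnion t).card := by
    intro s
    rcases s.eq_empty_or_nonempty with rfl | hs
    · simp
    have hbu : s.biUnion t = (s.image Prod.fst).biUnion bdry := by
      ext e
      simp only [mem_biUnion, mem_image, ht]
      constructor
      · rintro ⟨p, hp, he⟩; exact ⟨p.1, ⟨p, hp, rfl⟩, he⟩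
      · rintro ⟨f, ⟨p, hp, rfl⟩, he⟩; exact ⟨p, hp, he⟩
    have hsub : s ⊆ (s.image Prod.fst) ×ˢ (univ : Finset (Fin 3)) := by
      intro p hp
      simp only [mem_product, mem_image, mem_univ, and_true]
      exact ⟨p, hp, rfl⟩
    have h1 : s.card ≤ 3 * (s.image Prod.fst).card := by
      calc s.card ≤ ((s.image Prod.fst) ×ˢ (univ : Finset (Fin 3))).card :=
            card_le_card hsub
        _ = 3 * (s.image Prod.fst).card := by
            rw [card_product]; simp [Nat.mul_comm]
    have h2 := h (s.image Prod.fst) (hs.image _)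
    rw [hbu]
    omega
  obtain ⟨g, hg, hgt⟩ := (Finset.all_card_le_biUnion_card_iff_exists_injective t).mp hall
  refine ⟨fun f => (univ : Finset (Fin 3)).image (fun i => g (f, i)), ?_, ?_⟩
  · intro f
    constructor
    · rw [card_image_of_injective _ (fun i j hij => by
        have := hg hij; exact (Prod.mk.injEq _ _ _ _).mp this |>.2)]
      simp
    · intro e he
      simp only [mem_image, mem_univ, true_and] at he
      obtain ⟨i, rfl⟩ := he
      exact hgt (f, i)
  · intro f f' hff
    rw [disjoint_left]
    intro e he he'
    simp only [mem_image, mem_univ, true_and] at he he'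
    obtain ⟨i, rfl⟩ := he
    obtain ⟨j, hj⟩ := he'
    exact hff ((Prod.mk.injEq _ _ _ _).mp (hg hj)).1.symm
end
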